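/- Let p > 1, let n be a positive integer, and let x_1, …, x_n ≥ 0. Define a_i = (x_1 + ⋯ + x_i)/i and let m_i be the lower median of x_1, …, x_i. Then Σ_{i=1}^n |m_i − a_i|^p ≤ 2^{1−p} (p/(p−1))^p Σ_{i=1}^n x_i^p. -/

import Mathlib

/-
Sort `x₁, …, xᵢ` increasingly. The lower median `mᵢ` sits at position `d = ⌊(i - 1)/2⌋`, with
`d` entries in `[0, mᵢ]` below it and `k = ⌊i/2⌋ ≥ d` entries above it, so
`|i mᵢ - (x₁ + ⋯ + xᵢ)|` is at most the sum of those `k` entries, hence at most `S k`, the sum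
of the `k` largest of `x₁, …, xₙ`. As `2k ≤ i`, this gives `|mᵢ - aᵢ| ≤ S k / (2k)`. Each `k`
arises from at most two indices `i`, and `S k / k` is the Cesàro mean of the decreasing
rearrangement of `x`, to which the discrete Hardy inequality applies.
-/

open MeasureTheory Set Filter

noncomputable def sortAsc (l : List ℝ) : List ℝ := l.mergeSort (· ≤ ·)
noncomputable def sortDesc (l : List ℝ) : List ℝ := (sortAsc l).reverse
noncomputable def listLowerMedian (l : List ℝ) : ℝ := (sortAsc l).getD ((l.length - 1) / 2) 0
def seg (x : ℕ → ℝ) (i : ℕ) : List ℝ := (List.range i).map (fun j => x (j+1))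

section Hardy

variable {p : ℝ}

theorem mul_rpow_sub_one_mul_le (hp : 1 < p) {a b : ℝ} (ha : 0 ≤ a) (hb : 0 ≤ b) :
    p * (a ^ (p - 1) * b) ≤ (p - 1) * a ^ p + b ^ p := by
  have hpq : p.HolderConjugate (p / (p - 1)) := Real.HolderConjugate.conjExponent hp
  have young := Real.young_inequality_of_nonneg hb (Real.rpow_nonneg ha (p - 1)) hpq
  rw [← Real.rpow_mul ha, mul_div_cancel₀ p (by linarith : p - 1 ≠ 0)] at young
  calc p * (a ^ (p - 1) * b) ≤ p * (b ^ p / p + a ^ p / (p / (p - 1))) := by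
        rw [mul_comm (a ^ (p - 1))]; gcongr
    _ = (p - 1) * a ^ p + b ^ p := by field_simp; ring

theorem rpow_sub_one_mul_self {a : ℝ} (hp : p ≠ 0) (ha : 0 ≤ a) : a ^ (p - 1) * a = a ^ p := by
  rcases ha.eq_or_lt with rfl | ha
  · simp [Real.zero_rpow hp]
  · rw [Real.rpow_sub_one ha.ne', div_mul_cancel₀ _ ha.ne']

/-- Elliott's step: with `a`, `b` the Cesàro means of `z` at `t + 1` and `t`, the factor
`(t + 1) * a - t * b` is `z (t + 1)`. -/
theorem hardy_step (hp : 1 < p) {a b t : ℝ} (ha : 0 ≤ a) (hb : 0 ≤ b) (ht : 0 ≤ t) :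
    (p - 1) * a ^ p + ((t + 1) * a ^ p - t * b ^ p)
      ≤ p * (a ^ (p - 1) * ((t + 1) * a - t * b)) := by
  have young := mul_le_mul_of_nonneg_left (mul_rpow_sub_one_mul_le hp ha hb) ht
  linear_combination young - p * (t + 1) * rpow_sub_one_mul_self (by positivity) ha

noncomputable def cesaroMean (z : ℕ → ℝ) (k : ℕ) : ℝ := (∑ r ∈ Finset.Icc 1 k, z r) / k

theorem natCast_mul_cesaroMean (z : ℕ → ℝ) (k : ℕ) :
    k * cesaroMean z k = ∑ r ∈ Finset.Icc 1 k, z r := by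
  rcases Nat.eq_zero_or_pos k with rfl | hk
  · simp
  · exact mul_div_cancel₀ _ (by positivity)

theorem cesaroMean_nonneg {z : ℕ → ℝ} (hz : ∀ r, 0 ≤ z r) (k : ℕ) : 0 ≤ cesaroMean z k :=
  div_nonneg (Finset.sum_nonneg fun r _ => hz r) k.cast_nonneg

theorem eq_cesaroMean_succ_sub (z : ℕ → ℝ) (k : ℕ) :
    z (k + 1) = (k + 1) * cesaroMean z (k + 1) - k * cesaroMean z k := by
  have h := natCast_mul_cesaroMean z (k + 1)
  rw [Finset.sum_Icc_succ_top (by omega), ← natCast_mul_cesaroMean] at h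
  push_cast at h
  linarith

theorem hardy_telescoped (hp : 1 < p) {z : ℕ → ℝ} (hz : ∀ r, 0 ≤ z r) (n : ℕ) :
    (p - 1) * ∑ k ∈ Finset.Icc 1 n, cesaroMean z k ^ p + n * cesaroMean z n ^ p
      ≤ p * ∑ k ∈ Finset.Icc 1 n, cesaroMean z k ^ (p - 1) * z k := by
  induction n with
  | zero => simp
  | succ n ih =>
    have step := hardy_step hp (cesaroMean_nonneg hz (n + 1)) (cesaroMean_nonneg hz n) n.cast_nonneg
    rw [← eq_cesaroMean_succ_sub] at step
    rw [Finset.sum_Icc_succ_top (by omega), Finset.sum_Icc_succ_top (by omega)]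
    push_cast
    linarith

theorem le_rpow_mul_of_le_mul_rpow_mul_rpow {q U V C : ℝ} (hpq : p.HolderConjugate q)
    (hU : 0 ≤ U) (hV : 0 ≤ V) (hC : 0 ≤ C) (h : U ≤ C * U ^ (1 / q) * V ^ (1 / p)) :
    U ≤ C ^ p * V := by
  rcases hU.eq_or_lt with rfl | hU
  · positivity
  have hsplit : U ^ (1 / p) * U ^ (1 / q) = U := by
    rw [← Real.rpow_add hU, one_div, one_div, hpq.inv_add_inv_eq_one, Real.rpow_one]
  have hroot : U ^ (1 / p) ≤ C * V ^ (1 / p) := by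
    have hq : 0 < U ^ (1 / q) := by positivity
    nlinarith
  calc U = (U ^ (1 / p)) ^ p := by rw [one_div, Real.rpow_inv_rpow hU.le hpq.ne_zero]
    _ ≤ (C * V ^ (1 / p)) ^ p := by gcongr; exact hpq.nonneg
    _ = C ^ p * V := by
      rw [Real.mul_rpow hC (by positivity), one_div, Real.rpow_inv_rpow hV hpq.ne_zero]

theorem sum_cesaroMean_rpow_le (hp : 1 < p) {z : ℕ → ℝ} (hz : ∀ r, 0 ≤ z r) (n : ℕ) :
    ∑ k ∈ Finset.Icc 1 n, cesaroMean z k ^ p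
      ≤ (p / (p - 1)) ^ p * ∑ k ∈ Finset.Icc 1 n, z k ^ p := by
  have hp1 : 0 < p - 1 := by linarith
  have hqp : (p / (p - 1)).HolderConjugate p := (Real.HolderConjugate.conjExponent hp).symm
  have hA := cesaroMean_nonneg hz
  have holder := Real.inner_le_Lp_mul_Lq_of_nonneg (Finset.Icc 1 n)
    (f := fun k => cesaroMean z k ^ (p - 1)) hqp (fun k _ => Real.rpow_nonneg (hA k) _)
    (fun k _ => hz k)
  simp only [← Real.rpow_mul (hA _), mul_div_cancel₀ p hp1.ne'] at holder
  have energy : (p - 1) * ∑ k ∈ Finset.Icc 1 n, cesaroMean z k ^ p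
      ≤ p * ∑ k ∈ Finset.Icc 1 n, cesaroMean z k ^ (p - 1) * z k :=
    le_of_add_le_of_nonneg_left (hardy_telescoped hp hz n)
      (mul_nonneg n.cast_nonneg (Real.rpow_nonneg (hA n) p))
  refine le_rpow_mul_of_le_mul_rpow_mul_rpow hqp.symm
    (Finset.sum_nonneg fun k _ => Real.rpow_nonneg (hA k) p)
    (Finset.sum_nonneg fun k _ => Real.rpow_nonneg (hz k) p) (by positivity) ?_
  rw [mul_assoc, div_mul_eq_mul_div, le_div_iff₀ hp1]
  nlinarith

end Hardy

theorem sortAsc_perm (l : List ℝ) : (sortAsc l).Perm l := List.mergeSort_perm l _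

theorem sortAsc_pairwise (l : List ℝ) : (sortAsc l).Pairwise (· ≤ ·) :=
  List.pairwise_mergeSort' (· ≤ ·) l

theorem sortDesc_perm (l : List ℝ) : (sortDesc l).Perm l :=
  (List.reverse_perm _).trans (sortAsc_perm l)

theorem sortDesc_pairwise (l : List ℝ) : (sortDesc l).Pairwise (· ≥ ·) :=
  List.pairwise_reverse.mpr (sortAsc_pairwise l)

theorem sortDesc_eq_of_perm {l m : List ℝ} (h : m.Perm l) (hm : m.Pairwise (· ≥ ·)) :
    sortDesc l = m :=
  List.Perm.eq_of_pairwise (fun _ _ _ _ h₁ h₂ => le_antisymm h₂ h₁) (sortDesc_pairwise l) hm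
    ((sortDesc_perm l).trans h.symm)

theorem le_of_sortDesc_eq_cons {l t : List ℝ} {M a : ℝ} (h : sortDesc l = M :: t) (ha : a ∈ l) :
    a ≤ M := by
  have hmem : a ∈ M :: t := h ▸ (sortDesc_perm l).mem_iff.mpr ha
  rcases List.mem_cons.mp hmem with rfl | hat
  · exact le_rfl
  · exact (List.pairwise_cons.mp (h ▸ sortDesc_pairwise l)).1 a hat

theorem sortDesc_erase_of_sortDesc_eq_cons {l t : List ℝ} {M : ℝ} (h : sortDesc l = M :: t) :
    sortDesc (l.erase M) = t := by
  refine sortDesc_eq_of_perm ?_ (List.pairwise_cons.mp (h ▸ sortDesc_pairwise l)).2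
  have := (h ▸ sortDesc_perm l).erase M
  rwa [List.erase_cons_head] at this

noncomputable def topSum (k : ℕ) (l : List ℝ) : ℝ := ((sortDesc l).take k).sum

theorem topSum_zero (l : List ℝ) : topSum 0 l = 0 := by simp [topSum]

theorem topSum_nonneg {l : List ℝ} (hl : ∀ a ∈ l, 0 ≤ a) (k : ℕ) : 0 ≤ topSum k l :=
  List.sum_nonneg fun _ ha => hl _ ((sortDesc_perm l).subset (List.mem_of_mem_take ha))

theorem topSum_succ_of_sortDesc_eq_cons {l t : List ℝ} {M : ℝ} (h : sortDesc l = M :: t)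
    (k : ℕ) : topSum (k + 1) l = M + topSum k (l.erase M) := by
  simp [topSum, h, sortDesc_erase_of_sortDesc_eq_cons h]

theorem topSum_monotone {l : List ℝ} (hl : ∀ a ∈ l, 0 ≤ a) : Monotone (topSum · l) :=
  fun _ _ hjk => (List.take_prefix_take_left hjk).sublist.sum_le_sum
    fun _ ha => hl _ ((sortDesc_perm l).subset (List.mem_of_mem_take ha))

theorem sum_le_topSum {s l : List ℝ} (hs : s.Subperm l) :
    s.sum ≤ topSum s.length l := by
  induction hk : s.length generalizing s l with
  | zero => simp_all [topSum_zero]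
  | succ k ih =>
    have hl₀ : l ≠ [] := by
      rintro rfl
      simp_all [List.subperm_nil]
    obtain ⟨M, t, hMt⟩ := List.exists_cons_of_ne_nil
      fun h : sortDesc l = [] => hl₀ (h ▸ sortDesc_perm l).nil_eq.symm
    -- Remove `M` from `s` if it occurs there, and otherwise any entry, which is at most `M`.
    obtain ⟨s', hs'k, hs'l, hsum⟩ :
        ∃ s' : List ℝ, s'.length = k ∧ s'.Subperm (l.erase M) ∧ s.sum ≤ M + s'.sum := by
      by_cases hMs : M ∈ s
      · exact ⟨s.erase M, by simp [List.length_erase_of_mem hMs, hk], hs.erase M,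
          (List.sum_erase hMs).ge⟩
      · obtain ⟨b, s', rfl⟩ := List.exists_cons_of_length_eq_add_one hk
        have hsub := hs.erase M
        rw [List.erase_of_not_mem hMs] at hsub
        refine ⟨s', by simpa using hk, (List.sublist_cons_self b s').subperm.trans hsub, ?_⟩
        simpa using le_of_sortDesc_eq_cons hMt (hs.subset (List.mem_cons_self ..))
    calc s.sum ≤ M + s'.sum := hsum
      _ ≤ M + topSum k (l.erase M) :=
        add_le_add_right (ih hs'l hs'k) M
      _ = topSum (k + 1) l := (topSum_succ_of_sortDesc_eq_cons hMt k).symm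

theorem topSum_le_topSum_of_subperm {l₁ l₂ : List ℝ} (h : l₁.Subperm l₂)
    (hl₂ : ∀ a ∈ l₂, 0 ≤ a) (k : ℕ) : topSum k l₁ ≤ topSum k l₂ := by
  have hs : ((sortDesc l₁).take k).Subperm l₂ :=
    ((List.take_sublist k _).subperm.trans (sortDesc_perm l₁).subperm).trans h
  exact (sum_le_topSum hs).trans (topSum_monotone hl₂ (List.length_take_le k _))

theorem abs_length_mul_sub_sum_le {a b : List ℝ} {m : ℝ} (hm : 0 ≤ m)
    (ha : ∀ x ∈ a, 0 ≤ x ∧ x ≤ m) (hb : ∀ x ∈ b, m ≤ x) (hab : a.length ≤ b.length) :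
    |((a ++ m :: b).length : ℝ) * m - (a ++ m :: b).sum| ≤ b.sum := by
  have hA₀ : 0 ≤ a.sum := List.sum_nonneg fun x hx => (ha x hx).1
  have hA : a.sum ≤ a.length * m := by
    simpa using List.sum_le_card_nsmul a m fun x hx => (ha x hx).2
  have hB : b.length * m ≤ b.sum := by simpa using List.card_nsmul_le_sum b m hb
  have hab' : (a.length : ℝ) * m ≤ b.length * m := by gcongr
  simp only [List.length_append, List.length_cons, List.sum_append, List.sum_cons]
  push_cast
  rw [abs_le]
  constructor <;> nlinarith

theorem abs_length_mul_listLowerMedian_sub_sum_le {l : List ℝ} (hl : l ≠ [])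
    (h₀ : ∀ a ∈ l, 0 ≤ a) :
    |l.length * listLowerMedian l - l.sum| ≤ topSum (l.length / 2) l := by
  set y := sortAsc l
  set d := (l.length - 1) / 2
  have hlen : y.length = l.length := (sortAsc_perm l).length_eq
  have hpos : 0 < l.length := List.length_pos_iff.mpr hl
  have hd : d < y.length := by omega
  have hsplit : y = y.take d ++ y[d] :: y.drop (d + 1) := by
    rw [List.getElem_cons_drop, List.take_append_drop]
  have hsorted : y.Pairwise (· ≤ ·) := sortAsc_pairwise l
  rw [hsplit, List.pairwise_append, List.pairwise_cons] at hsorted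
  have hmed : listLowerMedian l = y[d] := List.getD_eq_getElem _ _ hd
  have htop : topSum (l.length / 2) l = (y.drop (d + 1)).sum := by
    rw [topSum, sortDesc, List.take_reverse, List.sum_reverse, hlen]
    congr 2
    omega
  have hy₀ : ∀ a ∈ y, 0 ≤ a := fun a ha => h₀ a ((sortAsc_perm l).subset ha)
  have key := abs_length_mul_sub_sum_le (hy₀ _ (List.getElem_mem hd))
    (fun a ha => ⟨hy₀ a (List.mem_of_mem_take ha), hsorted.2.2 a ha _ List.mem_cons_self⟩)
    hsorted.2.1.1 (by simp only [List.length_take, List.length_drop]; omega)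
  rwa [← hsplit, hlen, (sortAsc_perm l).sum_eq, ← hmed, ← htop] at key

theorem sum_take_eq_sum_Icc_getD {M : Type*} [AddCommMonoid M] (l : List M) (k : ℕ) :
    (l.take k).sum = ∑ r ∈ Finset.Icc 1 k, l.getD (r - 1) 0 := by
  induction k with
  | zero => simp
  | succ k ih =>
    rw [Finset.sum_Icc_succ_top (by omega), ← ih, Nat.add_sub_cancel]
    rcases lt_or_ge k l.length with hk | hk
    · rw [List.sum_take_succ _ _ hk, List.getD_eq_getElem _ _ hk]
    · rw [List.take_of_length_le hk, List.take_of_length_le (by omega),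
        List.getD_eq_default _ _ hk, add_zero]

theorem sum_topSum_div_rpow_le {p : ℝ} (hp : 1 < p) {l : List ℝ} (hl : ∀ a ∈ l, 0 ≤ a) :
    ∑ k ∈ Finset.Icc 1 l.length, (topSum k l / k) ^ p
      ≤ (p / (p - 1)) ^ p * (l.map (· ^ p)).sum := by
  set w := sortDesc l
  have hz : ∀ r, 0 ≤ w.getD (r - 1) 0 := fun r => by
    rcases lt_or_ge (r - 1) w.length with hr | hr
    · exact List.getD_eq_getElem _ _ hr ▸ hl _ ((sortDesc_perm l).subset (List.getElem_mem hr))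
    · exact (List.getD_eq_default _ _ hr).ge
  have hpow : (l.map (· ^ p)).sum = ∑ r ∈ Finset.Icc 1 l.length, w.getD (r - 1) 0 ^ p := by
    have h0 : (0 : ℝ) ^ p = 0 := Real.zero_rpow (by linarith)
    rw [← ((sortDesc_perm l).map _).sum_eq, ← List.take_length (l := w.map _),
      sum_take_eq_sum_Icc_getD, List.length_map, (sortDesc_perm l).length_eq]
    refine Finset.sum_congr rfl fun r _ => ?_
    rw [← h0, List.getD_map, h0]
  simpa only [hpow, topSum, sum_take_eq_sum_Icc_getD, cesaroMean] using
    sum_cesaroMean_rpow_le hp hz l.length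

theorem seg_length (x : ℕ → ℝ) (i : ℕ) : (seg x i).length = i := by simp [seg]

theorem sum_map_seg (f : ℝ → ℝ) (x : ℕ → ℝ) (n : ℕ) :
    ((seg x n).map f).sum = ∑ j ∈ Finset.Icc 1 n, f (x j) := by
  induction n with
  | zero => simp [seg]
  | succ n ih => simp [seg, List.range_succ, Finset.sum_Icc_succ_top, ← ih]

theorem sum_seg (x : ℕ → ℝ) (n : ℕ) : (seg x n).sum = ∑ j ∈ Finset.Icc 1 n, x j := by
  simpa using sum_map_seg id x n

theorem seg_sublist (x : ℕ → ℝ) {i n : ℕ} (h : i ≤ n) : (seg x i).Sublist (seg x n) :=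
  (List.range_sublist.mpr h).map _

theorem nonneg_of_mem_seg {x : ℕ → ℝ} {n : ℕ} (hx : ∀ j, 1 ≤ j → j ≤ n → 0 ≤ x j) {a : ℝ}
    (ha : a ∈ seg x n) : 0 ≤ a := by
  obtain ⟨j, hj, rfl⟩ := List.mem_map.mp ha
  exact hx (j + 1) (by omega) (by simpa using hj)

theorem abs_listLowerMedian_seg_sub_le {x : ℕ → ℝ} {n : ℕ} (hx : ∀ j, 1 ≤ j → j ≤ n → 0 ≤ x j)
    {i : ℕ} (hi : i ∈ Finset.Icc 1 n) :
    |listLowerMedian (seg x i) - (∑ j ∈ Finset.Icc 1 i, x j) / i|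
      ≤ topSum (i / 2) (seg x n) / (i / 2 : ℕ) / 2 := by
  obtain ⟨hi₁, hin⟩ := Finset.mem_Icc.mp hi
  have hL : ∀ a ∈ seg x n, 0 ≤ a := fun a => nonneg_of_mem_seg hx
  have hmed := abs_length_mul_listLowerMedian_sub_sum_le (l := seg x i)
    (List.ne_nil_of_length_pos (by rw [seg_length]; omega))
    fun a ha => hL a ((seg_sublist x hin).subset ha)
  rw [seg_length, sum_seg] at hmed
  have hS := topSum_le_topSum_of_subperm (seg_sublist x hin).subperm hL (i / 2)
  have hipos : (0 : ℝ) < i := by exact_mod_cast hi₁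
  calc |listLowerMedian (seg x i) - (∑ j ∈ Finset.Icc 1 i, x j) / i|
      = |i * listLowerMedian (seg x i) - ∑ j ∈ Finset.Icc 1 i, x j| / i := by
        rw [← abs_of_pos hipos, ← abs_div, abs_of_pos hipos]; congr 1; field_simp
    _ ≤ topSum (i / 2) (seg x n) / i := by gcongr; exact hmed.trans hS
    _ ≤ topSum (i / 2) (seg x n) / (i / 2 : ℕ) / 2 := by
        rcases Nat.eq_zero_or_pos (i / 2) with hk | hk
        · simp [hk, topSum_zero]
        · rw [div_div]
          gcongr
          · exact topSum_nonneg hL _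
          · exact_mod_cast (by omega : i / 2 * 2 ≤ i)

theorem sum_Icc_div_two_le {g : ℕ → ℝ} (hg : ∀ k, 0 ≤ g k) (hg₀ : g 0 = 0) (n : ℕ) :
    ∑ i ∈ Finset.Icc 1 n, g (i / 2) ≤ 2 * ∑ k ∈ Finset.Icc 1 n, g k := by
  have hodd : ∀ m, ∑ i ∈ Finset.Icc 1 (2 * m + 1), g (i / 2) = 2 * ∑ k ∈ Finset.Icc 1 m, g k := by
    intro m
    induction m with
    | zero => simp [hg₀]
    | succ m ih =>
      rw [show 2 * (m + 1) + 1 = 2 * m + 1 + 1 + 1 by ring, Finset.sum_Icc_succ_top (by omega),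
        Finset.sum_Icc_succ_top (by omega), ih, Finset.sum_Icc_succ_top (by omega),
        show (2 * m + 1 + 1) / 2 = m + 1 by omega, show (2 * m + 1 + 1 + 1) / 2 = m + 1 by omega]
      ring
  calc ∑ i ∈ Finset.Icc 1 n, g (i / 2) ≤ ∑ i ∈ Finset.Icc 1 (2 * n + 1), g (i / 2) :=
        Finset.sum_le_sum_of_subset_of_nonneg (Finset.Icc_subset_Icc le_rfl (by omega))
          fun i _ _ => hg _
    _ = 2 * ∑ k ∈ Finset.Icc 1 n, g k := hodd n

theorem median_hardy_stmt16_general (p : ℝ) (hp : 1 < p) (n : ℕ) (x : ℕ → ℝ)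
    (hx : ∀ j, 1 ≤ j → j ≤ n → 0 ≤ x j) :
    ∑ i ∈ Finset.Icc 1 n,
        |listLowerMedian (seg x i) - (∑ j ∈ Finset.Icc 1 i, x j) / i| ^ p
      ≤ 2 ^ (1 - p) * (p / (p - 1)) ^ p * ∑ i ∈ Finset.Icc 1 n, x i ^ p := by
  have hL : ∀ a ∈ seg x n, 0 ≤ a := fun a => nonneg_of_mem_seg hx
  set g : ℕ → ℝ := fun k => (topSum k (seg x n) / k) ^ p
  have hg : ∀ k, 0 ≤ g k := fun k =>
    Real.rpow_nonneg (div_nonneg (topSum_nonneg hL k) k.cast_nonneg) p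
  have hg₀ : g 0 = 0 := by simp [g, Real.zero_rpow (by linarith : p ≠ 0)]
  have hterm : ∀ i ∈ Finset.Icc 1 n,
      |listLowerMedian (seg x i) - (∑ j ∈ Finset.Icc 1 i, x j) / i| ^ p ≤ g (i / 2) / 2 ^ p := by
    intro i hi
    rw [← Real.div_rpow (div_nonneg (topSum_nonneg hL _) (Nat.cast_nonneg _)) zero_le_two]
    exact Real.rpow_le_rpow (abs_nonneg _) (abs_listLowerMedian_seg_sub_le hx hi) (by linarith)
  have hhardy : ∑ k ∈ Finset.Icc 1 n, g k ≤ (p / (p - 1)) ^ p * ∑ i ∈ Finset.Icc 1 n, x i ^ p := by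
    simpa only [seg_length, sum_map_seg] using sum_topSum_div_rpow_le hp hL
  calc _ ≤ ∑ i ∈ Finset.Icc 1 n, g (i / 2) / 2 ^ p := Finset.sum_le_sum hterm
    _ = (∑ i ∈ Finset.Icc 1 n, g (i / 2)) / 2 ^ p := (Finset.sum_div ..).symm
    _ ≤ 2 * ((p / (p - 1)) ^ p * ∑ i ∈ Finset.Icc 1 n, x i ^ p) / 2 ^ p := by
        gcongr
        exact (sum_Icc_div_two_le hg hg₀ n).trans (by gcongr)
    _ = _ := by rw [Real.rpow_sub two_pos, Real.rpow_one]; ring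

theorem median_hardy_stmt16 (p : ℝ) (hp : 1 < p) (n : ℕ) (hn : 1 ≤ n) (x : ℕ → ℝ)
    (hx : ∀ j, 1 ≤ j → j ≤ n → 0 ≤ x j) :
    ∑ i ∈ Finset.Icc 1 n,
        |listLowerMedian (seg x i) - (∑ j ∈ Finset.Icc 1 i, x j) / i| ^ p
      ≤ 2 ^ (1 - p) * (p / (p - 1)) ^ p * ∑ i ∈ Finset.Icc 1 n, x i ^ p :=
  median_hardy_stmt16_general p hp n x hx
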